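/- With h_ε(x) = sinh(x) + εx, ℓ ∈ (−1,1)\{0}, and V(x₁,x₂) the potential of the density ρ(x) = (2π√(1−ℓ²))⁻¹ h_ε'(x₁)h_ε'(x₂) exp(−(h_ε(x₁)² + h_ε(x₂)² − 2ℓ h_ε(x₁)h_ε(x₂))/(2(1−ℓ²))), the determinant of the Hessian of V = −log ρ at the origin equals ((1/(1−ℓ²) − 1/(1+ε)³)² − (ℓ/(1−ℓ²))²)(1+ε)⁴, which is strictly negative whenever (1+ε)³ < 1 + |ℓ|; hence ρ is not log-concave for such ε. -/

import Mathlib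

/-!
Write `h = sinh + ε • id`. Taking `-log` of `ρ` separates the variables up to one product term:
`V x = K + φ (x 0) + φ (x 1) + m * h (x 0) * h (x 1)` with `φ = -log h' + h ^ 2 / (2 * (1 - ℓ ^ 2))`
and `m = -ℓ / (1 - ℓ ^ 2)`. As `h 0 = h'' 0 = 0`, the Hessian at the origin is `!![a, b; b, a]` with
`a = φ'' 0 = (1 + ε) ^ 2 / (1 - ℓ ^ 2) - 1 / (1 + ε)` and `b = m * (1 + ε) ^ 2`, whence the
determinant `(a - |b|) * (a + |b|)`, where
`a ∓ |b| = (1 + ε) ^ 2 * (1 / (1 ± |ℓ|) - 1 / (1 + ε) ^ 3)`.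
A convex function has a nonnegative second derivative along every line, so its Hessian is positive
semidefinite and has a nonnegative determinant.
-/

open Real Set

theorem ConvexOn.nonneg_of_hasDerivAt_of_hasDerivAt {f f' : ℝ → ℝ} {f'' x : ℝ}
    (hf : ConvexOn ℝ univ f) (hf' : ∀ t, HasDerivAt f (f' t) t) (hf'' : HasDerivAt f' f'' x) :
    0 ≤ f'' := by
  have hderiv : deriv f = f' := funext fun t => (hf' t).deriv
  have hmono := hf.monotoneOn_deriv fun t _ => (hf' t).differentiableAt
  rw [hderiv, monotoneOn_univ] at hmono
  exact hf''.nonneg_of_monotone hmono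

theorem ConvexOn.nonneg_of_hasFDerivAt_fderiv_apply {E : Type*} [NormedAddCommGroup E]
    [NormedSpace ℝ E] {V : E → ℝ} {p v : E} {L : E →L[ℝ] ℝ} (hV : ConvexOn ℝ univ V)
    (hd : Differentiable ℝ V)
    (hL : HasFDerivAt (fun x => fderiv ℝ V x v) L p) : 0 ≤ L v := by
  have hline : ∀ t : ℝ, HasDerivAt (fun t : ℝ => p + t • v) v t := fun t => by
    simpa using ((hasDerivAt_id t).smul_const v).const_add p
  have hconv : ConvexOn ℝ univ fun t : ℝ => V (p + t • v) := by
    have heq : (fun t : ℝ => V (p + t • v)) = V ∘ AffineMap.lineMap p (p + v) :=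
      funext fun t => by simp [AffineMap.lineMap_apply_module', add_comm]
    simpa [heq] using hV.comp_affineMap (AffineMap.lineMap p (p + v))
  exact hconv.nonneg_of_hasDerivAt_of_hasDerivAt
    (fun t => (hd _).hasFDerivAt.comp_hasDerivAt t (hline t))
    (hL.comp_hasDerivAt_of_eq 0 (hline 0) (by simp))

noncomputable def hessianMatrix {ι : Type*} [DecidableEq ι] (V : (ι → ℝ) → ℝ) (p : ι → ℝ) :
    Matrix ι ι ℝ :=
  Matrix.of fun i j => fderiv ℝ (fun x => fderiv ℝ V x (Pi.single j 1)) p (Pi.single i 1)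

theorem ConvexOn.posSemidef_hessianMatrix {ι : Type*} [Fintype ι] [DecidableEq ι]
    {V : (ι → ℝ) → ℝ} {p : ι → ℝ} (hV : ConvexOn ℝ univ V) (hd : Differentiable ℝ V)
    (hd2 : ∀ j, DifferentiableAt ℝ (fun x => fderiv ℝ V x (Pi.single j 1)) p)
    (hsymm : (hessianMatrix V p).IsHermitian) : (hessianMatrix V p).PosSemidef := by
  refine .of_dotProduct_mulVec_nonneg hsymm fun v => ?_
  have hsingle : ∀ L : (ι → ℝ) →L[ℝ] ℝ, L v = ∑ j, v j * L (Pi.single j 1) := fun L => by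
    conv_lhs => rw [← Finset.univ_sum_single v]
    refine (map_sum L _ _).trans (Finset.sum_congr rfl fun j _ => ?_)
    rw [← smul_eq_mul, ← map_smul, ← Pi.single_smul', smul_eq_mul, mul_one]
  have hL := HasFDerivAt.fun_sum (u := Finset.univ) fun j _ =>
    (hd2 j).hasFDerivAt.const_mul (v j)
  simp only [← hsingle] at hL
  refine (hV.nonneg_of_hasFDerivAt_fderiv_apply hd hL).trans_eq ?_
  rw [sum_apply]
  simp only [dotProduct, Matrix.mulVec, hessianMatrix, smul_apply, hsingle (fderiv ℝ _ p),
    Matrix.of_apply, star_trivial, smul_eq_mul, Finset.mul_sum]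
  rw [Finset.sum_comm]
  exact Finset.sum_congr rfl fun i _ => Finset.sum_congr rfl fun j _ => by ring

def sepForm (α β γ δ : ℝ → ℝ) (x : Fin 2 → ℝ) : ℝ := α (x 0) + β (x 1) + γ (x 0) * δ (x 1)

section SepForm

variable {α β γ δ α' β' γ' δ' : ℝ → ℝ} {p : Fin 2 → ℝ} {a b c d : ℝ}

theorem hasFDerivAt_sepForm (hα : HasDerivAt α a (p 0)) (hβ : HasDerivAt β b (p 1))
    (hγ : HasDerivAt γ c (p 0)) (hδ : HasDerivAt δ d (p 1)) :
    HasFDerivAt (sepForm α β γ δ)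
      ((a + c * δ (p 1)) • ContinuousLinearMap.proj (R := ℝ) (φ := fun _ => ℝ) 0 +
        (b + γ (p 0) * d) • ContinuousLinearMap.proj (R := ℝ) (φ := fun _ => ℝ) 1) p := by
  have hx₀ := (ContinuousLinearMap.proj (R := ℝ) (φ := fun _ : Fin 2 => ℝ) 0).hasFDerivAt (x := p)
  have hx₁ := (ContinuousLinearMap.proj (R := ℝ) (φ := fun _ : Fin 2 => ℝ) 1).hasFDerivAt (x := p)
  refine (((hα.comp_hasFDerivAt p hx₀).add (hβ.comp_hasFDerivAt p hx₁)).add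
    ((hγ.comp_hasFDerivAt p hx₀).mul (hδ.comp_hasFDerivAt p hx₁))).congr_fderiv ?_
  ext v
  simp only [Fin.isValue, Function.comp_apply, ContinuousLinearMap.proj_apply, add_apply,
    smul_apply, smul_eq_mul]
  ring

theorem fderiv_sepForm_single_zero (hα : HasDerivAt α a (p 0)) (hβ : HasDerivAt β b (p 1))
    (hγ : HasDerivAt γ c (p 0)) (hδ : HasDerivAt δ d (p 1)) :
    fderiv ℝ (sepForm α β γ δ) p (Pi.single 0 1) = a + c * δ (p 1) := by
  simp [(hasFDerivAt_sepForm hα hβ hγ hδ).fderiv]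

theorem fderiv_sepForm_single_one (hα : HasDerivAt α a (p 0)) (hβ : HasDerivAt β b (p 1))
    (hγ : HasDerivAt γ c (p 0)) (hδ : HasDerivAt δ d (p 1)) :
    fderiv ℝ (sepForm α β γ δ) p (Pi.single 1 1) = b + γ (p 0) * d := by
  simp [(hasFDerivAt_sepForm hα hβ hγ hδ).fderiv]

theorem fderiv_sepForm_single_zero_eq (hα : ∀ t, HasDerivAt α (α' t) t)
    (hβ : ∀ t, HasDerivAt β (β' t) t) (hγ : ∀ t, HasDerivAt γ (γ' t) t)
    (hδ : ∀ t, HasDerivAt δ (δ' t) t) :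
    (fun x => fderiv ℝ (sepForm α β γ δ) x (Pi.single 0 1)) = sepForm α' 0 γ' δ := by
  ext x
  simp [fderiv_sepForm_single_zero (hα _) (hβ _) (hγ _) (hδ _), sepForm]

theorem fderiv_sepForm_single_one_eq (hα : ∀ t, HasDerivAt α (α' t) t)
    (hβ : ∀ t, HasDerivAt β (β' t) t) (hγ : ∀ t, HasDerivAt γ (γ' t) t)
    (hδ : ∀ t, HasDerivAt δ (δ' t) t) :
    (fun x => fderiv ℝ (sepForm α β γ δ) x (Pi.single 1 1)) = sepForm 0 β' γ δ' := by
  ext x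
  simp [fderiv_sepForm_single_one (hα _) (hβ _) (hγ _) (hδ _), sepForm]

theorem hessianMatrix_sepForm (hα : ∀ t, HasDerivAt α (α' t) t)
    (hβ : ∀ t, HasDerivAt β (β' t) t) (hγ : ∀ t, HasDerivAt γ (γ' t) t)
    (hδ : ∀ t, HasDerivAt δ (δ' t) t) (hα' : HasDerivAt α' a (p 0))
    (hβ' : HasDerivAt β' b (p 1)) (hγ' : HasDerivAt γ' c (p 0)) (hδ' : HasDerivAt δ' d (p 1)) :
    hessianMatrix (sepForm α β γ δ) p =
      !![a + c * δ (p 1), γ' (p 0) * δ' (p 1); γ' (p 0) * δ' (p 1), b + γ (p 0) * d] := by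
  have h₀ : HasDerivAt (0 : ℝ → ℝ) 0 (p 1) := hasDerivAt_const _ _
  have h₁ : HasDerivAt (0 : ℝ → ℝ) 0 (p 0) := hasDerivAt_const _ _
  ext i j
  fin_cases i <;> fin_cases j <;>
    simp [hessianMatrix, fderiv_sepForm_single_zero_eq hα hβ hγ hδ,
      fderiv_sepForm_single_one_eq hα hβ hγ hδ,
      fderiv_sepForm_single_zero hα' h₀ hγ' (hδ _), fderiv_sepForm_single_one hα' h₀ hγ' (hδ _),
      fderiv_sepForm_single_zero h₁ hβ' (hγ _) hδ', fderiv_sepForm_single_one h₁ hβ' (hγ _) hδ']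

theorem ConvexOn.posSemidef_hessianMatrix_sepForm (hconv : ConvexOn ℝ univ (sepForm α β γ δ))
    (hα : ∀ t, HasDerivAt α (α' t) t) (hβ : ∀ t, HasDerivAt β (β' t) t)
    (hγ : ∀ t, HasDerivAt γ (γ' t) t) (hδ : ∀ t, HasDerivAt δ (δ' t) t)
    (hα' : HasDerivAt α' a (p 0)) (hβ' : HasDerivAt β' b (p 1)) (hγ' : HasDerivAt γ' c (p 0))
    (hδ' : HasDerivAt δ' d (p 1)) : (hessianMatrix (sepForm α β γ δ) p).PosSemidef := by
  have h₀ : HasDerivAt (0 : ℝ → ℝ) 0 (p 1) := hasDerivAt_const _ _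
  have h₁ : HasDerivAt (0 : ℝ → ℝ) 0 (p 0) := hasDerivAt_const _ _
  refine hconv.posSemidef_hessianMatrix
    (fun x => (hasFDerivAt_sepForm (hα _) (hβ _) (hγ _) (hδ _)).differentiableAt)
    (Fin.forall_fin_two.2 ⟨?_, ?_⟩) ?_
  · rw [fderiv_sepForm_single_zero_eq hα hβ hγ hδ]
    exact (hasFDerivAt_sepForm hα' h₀ hγ' (hδ _)).differentiableAt
  · rw [fderiv_sepForm_single_one_eq hα hβ hγ hδ]
    exact (hasFDerivAt_sepForm h₁ hβ' (hγ _) hδ').differentiableAt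
  · rw [hessianMatrix_sepForm hα hβ hγ hδ hα' hβ' hγ' hδ']
    ext i j
    fin_cases i <;> fin_cases j <;> simp

end SepForm

theorem neg_log_gaussianCopula_density {h h' : ℝ → ℝ} {C ℓ : ℝ} (hC : 0 < C)
    (hh' : ∀ t, 0 < h' t) (x : Fin 2 → ℝ) :
    -log (C⁻¹ * h' (x 0) * h' (x 1) *
      exp (-(h (x 0) ^ 2 + h (x 1) ^ 2 - 2 * ℓ * h (x 0) * h (x 1)) / (2 * (1 - ℓ ^ 2)))) =
    sepForm (fun t => log C + (-log (h' t) + (2 * (1 - ℓ ^ 2))⁻¹ * h t ^ 2))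
      (fun t => -log (h' t) + (2 * (1 - ℓ ^ 2))⁻¹ * h t ^ 2)
      (fun t => -(ℓ / (1 - ℓ ^ 2)) * h t) h x := by
  have := hh' (x 0)
  have := hh' (x 1)
  rw [log_mul (by positivity) (exp_pos _).ne', log_mul (by positivity) (by positivity),
    log_mul (by positivity) (by positivity), log_exp, log_inv, sepForm]
  simp only [div_eq_mul_inv, mul_inv]
  ring

theorem hasDerivAt_sinh_add_mul (ε t : ℝ) :
    HasDerivAt (fun t => sinh t + ε * t) (cosh t + ε) t := by
  simpa using (hasDerivAt_sinh t).fun_add ((hasDerivAt_id' t).const_mul ε)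

theorem hasDerivAt_cosh_add (ε t : ℝ) : HasDerivAt (fun t => cosh t + ε) (sinh t) t :=
  (hasDerivAt_cosh t).add_const ε

theorem cosh_add_pos {ε : ℝ} (hε : -1 < ε) (t : ℝ) : 0 < cosh t + ε := by
  linarith [one_le_cosh t]

noncomputable def marginalPotential (ε c t : ℝ) : ℝ :=
  -log (cosh t + ε) + c * (sinh t + ε * t) ^ 2

theorem hasDerivAt_marginalPotential {ε : ℝ} (hε : -1 < ε) (c t : ℝ) :
    HasDerivAt (marginalPotential ε c)
      (-(sinh t / (cosh t + ε)) + c * (2 * (sinh t + ε * t) * (cosh t + ε))) t := by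
  have hlog := (hasDerivAt_cosh_add ε t).log (cosh_add_pos hε t).ne'
  have hsq := (hasDerivAt_sinh_add_mul ε t).pow 2
  refine (hlog.neg.fun_add (hsq.const_mul c)).congr_deriv ?_
  ring

theorem hasDerivAt_marginalPotential_deriv_zero {ε : ℝ} (hε : -1 < ε) (c : ℝ) :
    HasDerivAt (fun t => -(sinh t / (cosh t + ε)) + c * (2 * (sinh t + ε * t) * (cosh t + ε)))
      (-(1 + ε)⁻¹ + 2 * c * (1 + ε) ^ 2) 0 := by
  have hquot := (hasDerivAt_sinh 0).div (hasDerivAt_cosh_add ε 0) (cosh_add_pos hε 0).ne'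
  have hprod := ((hasDerivAt_sinh_add_mul ε 0).const_mul 2).mul (hasDerivAt_cosh_add ε 0)
  refine (hquot.neg.add (hprod.const_mul c)).congr_deriv ?_
  have h1ε : 1 + ε ≠ 0 := by linarith
  simp only [cosh_zero, sinh_zero]
  field_simp
  ring

noncomputable def copulaPotential (ε k c m : ℝ) : (Fin 2 → ℝ) → ℝ :=
  sepForm (fun t => k + marginalPotential ε c t) (marginalPotential ε c)
    (fun t => m * (sinh t + ε * t)) (fun t => sinh t + ε * t)

theorem hessianMatrix_copulaPotential_zero {ε : ℝ} (hε : -1 < ε) (k c m : ℝ) :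
    hessianMatrix (copulaPotential ε k c m) 0 =
      !![-(1 + ε)⁻¹ + 2 * c * (1 + ε) ^ 2, m * (1 + ε) ^ 2;
        m * (1 + ε) ^ 2, -(1 + ε)⁻¹ + 2 * c * (1 + ε) ^ 2] := by
  rw [copulaPotential,
    hessianMatrix_sepForm (fun t => (hasDerivAt_marginalPotential hε c t).const_add k)
    (hasDerivAt_marginalPotential hε c) (fun t => (hasDerivAt_sinh_add_mul ε t).const_mul m)
    (hasDerivAt_sinh_add_mul ε) (hasDerivAt_marginalPotential_deriv_zero hε c)
    (hasDerivAt_marginalPotential_deriv_zero hε c) ((hasDerivAt_cosh_add ε 0).const_mul m)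
    (hasDerivAt_cosh_add ε 0)]
  simp [sq, mul_assoc]

theorem ConvexOn.posSemidef_hessianMatrix_copulaPotential_zero {ε k c m : ℝ} (hε : -1 < ε)
    (hconv : ConvexOn ℝ univ (copulaPotential ε k c m)) :
    (hessianMatrix (copulaPotential ε k c m) 0).PosSemidef :=
  hconv.posSemidef_hessianMatrix_sepForm
    (fun t => (hasDerivAt_marginalPotential hε c t).const_add k) (hasDerivAt_marginalPotential hε c)
    (fun t => (hasDerivAt_sinh_add_mul ε t).const_mul m)
    (hasDerivAt_sinh_add_mul ε) (hasDerivAt_marginalPotential_deriv_zero hε c)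
    (hasDerivAt_marginalPotential_deriv_zero hε c) ((hasDerivAt_cosh_add ε 0).const_mul m)
    (hasDerivAt_cosh_add ε 0)

noncomputable def copulaHessianDet (ε ℓ : ℝ) : ℝ :=
  ((1 / (1 - ℓ ^ 2) - 1 / (1 + ε) ^ 3) ^ 2 - (ℓ / (1 - ℓ ^ 2)) ^ 2) * (1 + ε) ^ 4

theorem det_hessianMatrix_copulaPotential_zero {ε ℓ : ℝ} (hε : -1 < ε) (hℓ : ℓ ^ 2 < 1)
    (k : ℝ) :
    (hessianMatrix (copulaPotential ε k (2 * (1 - ℓ ^ 2))⁻¹ (-(ℓ / (1 - ℓ ^ 2)))) 0).det =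
      copulaHessianDet ε ℓ := by
  have h1ε : 1 + ε ≠ 0 := by linarith
  have h1ℓ : 1 - ℓ ^ 2 ≠ 0 := by linarith
  rw [hessianMatrix_copulaPotential_zero hε, Matrix.det_fin_two_of, copulaHessianDet]
  field_simp
  ring

theorem copulaHessianDet_neg {ε ℓ : ℝ} (hε : 0 ≤ ε) (hℓ : |ℓ| < 1)
    (hsmall : (1 + ε) ^ 3 < 1 + |ℓ|) : copulaHessianDet ε ℓ < 0 := by
  have he3 : 1 ≤ (1 + ε) ^ 3 := one_le_pow₀ (by linarith)
  have hpos : 0 < 1 - |ℓ| := by linarith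
  have hminus : 1 / (1 + |ℓ|) - 1 / (1 + ε) ^ 3 < 0 := by
    rw [sub_neg]; exact one_div_lt_one_div_of_lt (by positivity) hsmall
  have hplus : 0 < 1 / (1 - |ℓ|) - 1 / (1 + ε) ^ 3 := by
    rw [sub_pos]; exact one_div_lt_one_div_of_lt hpos (by linarith)
  have hfactor : copulaHessianDet ε ℓ =
      (1 / (1 + |ℓ|) - 1 / (1 + ε) ^ 3) * (1 / (1 - |ℓ|) - 1 / (1 + ε) ^ 3) * (1 + ε) ^ 4 := by
    have h1ℓ : 1 - |ℓ| ^ 2 ≠ 0 := by nlinarith [abs_nonneg ℓ]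
    have h1ε : 1 + ε ≠ 0 := by linarith
    rw [copulaHessianDet, div_pow, ← sq_abs ℓ]
    field_simp
    ring
  rw [hfactor]
  exact mul_neg_of_neg_of_pos (mul_neg_of_neg_of_pos hminus hplus) (by positivity)

theorem stmt_17_general (ε ℓ : ℝ) (hε : 0 < ε) (hℓ : ℓ ∈ Set.Ioo (-1 : ℝ) 1)
    (h : ℝ → ℝ) (hh : h = fun x => Real.sinh x + ε * x)
    (ρ : (Fin 2 → ℝ) → ℝ)
    (hρ : ρ = fun x => (2 * π * Real.sqrt (1 - ℓ ^ 2))⁻¹ *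
      (Real.cosh (x 0) + ε) * (Real.cosh (x 1) + ε) *
      Real.exp (-((h (x 0)) ^ 2 + (h (x 1)) ^ 2 - 2 * ℓ * h (x 0) * h (x 1)) /
        (2 * (1 - ℓ ^ 2))))
    (V : (Fin 2 → ℝ) → ℝ) (hV : V = fun x => -Real.log (ρ x))
    -- the Hessian matrix of V at the origin
    (H : Matrix (Fin 2) (Fin 2) ℝ)
    (hH : H = Matrix.of fun i j =>
      fderiv ℝ (fun x => fderiv ℝ V x (Pi.single j 1)) 0 (Pi.single i 1)) :
    H.det = ((1 / (1 - ℓ ^ 2) - 1 / (1 + ε) ^ 3) ^ 2 - (ℓ / (1 - ℓ ^ 2)) ^ 2) *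
      (1 + ε) ^ 4 ∧
    ((1 + ε) ^ 3 < 1 + |ℓ| → H.det < 0 ∧ ¬ ConvexOn ℝ Set.univ V) := by
  have hε' : -1 < ε := by linarith
  have hℓ' : |ℓ| < 1 := abs_lt.2 hℓ
  have hℓsq : ℓ ^ 2 < 1 := (sq_lt_one_iff_abs_lt_one ℓ).2 hℓ'
  have hC : 0 < 2 * π * √(1 - ℓ ^ 2) := by
    have := sqrt_pos.2 (sub_pos.2 hℓsq)
    positivity
  have hVcop : V = copulaPotential ε (log (2 * π * √(1 - ℓ ^ 2))) (2 * (1 - ℓ ^ 2))⁻¹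
      (-(ℓ / (1 - ℓ ^ 2))) := by
    subst hV hρ hh
    funext x
    exact neg_log_gaussianCopula_density (h := fun t => sinh t + ε * t)
      (h' := fun t => cosh t + ε) hC (cosh_add_pos hε') x
  have hHess : H = hessianMatrix V 0 := hH
  have hdet : H.det = copulaHessianDet ε ℓ := by
    rw [hHess, hVcop, det_hessianMatrix_copulaPotential_zero hε' hℓsq]
  refine ⟨hdet, fun hsmall => ?_⟩
  have hneg : H.det < 0 := hdet ▸ copulaHessianDet_neg hε.le hℓ' hsmall
  refine ⟨hneg, fun hconv => hneg.not_ge ?_⟩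
  rw [hVcop] at hconv hHess
  exact hHess ▸ (hconv.posSemidef_hessianMatrix_copulaPotential_zero hε').det_nonneg

/-- With `h_ε(x) = sinh x + εx` and `ℓ ∈ (−1,1) \ {0}`, the potential `V = −log ρ` of the
two-dimensional density with Gaussian copula and marginals `Φ ∘ h_ε` has Hessian determinant
at the origin equal to `((1/(1−ℓ²) − 1/(1+ε)³)² − (ℓ/(1−ℓ²))²)(1+ε)⁴`; this is strictly
negative whenever `(1+ε)³ < 1 + |ℓ|`, hence `V` is not convex and `ρ` is not log-concave. -/
theorem stmt_17 (ε ℓ : ℝ) (hε : 0 < ε) (hℓ : ℓ ∈ Set.Ioo (-1 : ℝ) 1) (hℓ0 : ℓ ≠ 0)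
    (h : ℝ → ℝ) (hh : h = fun x => Real.sinh x + ε * x)
    (ρ : (Fin 2 → ℝ) → ℝ)
    (hρ : ρ = fun x => (2 * π * Real.sqrt (1 - ℓ ^ 2))⁻¹ *
      (Real.cosh (x 0) + ε) * (Real.cosh (x 1) + ε) *
      Real.exp (-((h (x 0)) ^ 2 + (h (x 1)) ^ 2 - 2 * ℓ * h (x 0) * h (x 1)) /
        (2 * (1 - ℓ ^ 2))))
    (V : (Fin 2 → ℝ) → ℝ) (hV : V = fun x => -Real.log (ρ x))
    -- the Hessian matrix of V at the origin
    (H : Matrix (Fin 2) (Fin 2) ℝ)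
    (hH : H = Matrix.of fun i j =>
      fderiv ℝ (fun x => fderiv ℝ V x (Pi.single j 1)) 0 (Pi.single i 1)) :
    H.det = ((1 / (1 - ℓ ^ 2) - 1 / (1 + ε) ^ 3) ^ 2 - (ℓ / (1 - ℓ ^ 2)) ^ 2) *
      (1 + ε) ^ 4 ∧
    ((1 + ε) ^ 3 < 1 + |ℓ| → H.det < 0 ∧ ¬ ConvexOn ℝ Set.univ V) :=
  stmt_17_general ε ℓ hε hℓ h hh ρ hρ V hV H hH
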